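/- Let k ≥ 50 and let γ be the dominant root of x^k - 2x^{k-1} - ... - x - 1, g_k(z) = (z-1)/((k+1)z² - 3kz + k - 1), and φ = (1+√5)/2. If n is an integer with 1 < n < φ^{k/2}, then (2γ - 2)g_k(γ)γ^n = (2φ^{2n+1}/(φ+2))(1 + ξ) for some real ξ with |ξ| < 1.25/φ^{k/2}. -/

import Mathlib

noncomputable def φ : ℝ := (1 + Real.sqrt 5) / 2

def IsDomRoot (k : ℕ) (γ : ℝ) : Prop :=
  1 < γ ∧ γ ^ k = 2 * γ ^ (k - 1) + ∑ i ∈ Finset.range (k - 1), γ ^ i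

noncomputable def g (k : ℕ) (z : ℝ) : ℝ :=
  (z - 1) / (((k : ℝ) + 1) * z ^ 2 - 3 * (k : ℝ) * z + ((k : ℝ) - 1))

/-! Multiplying the root equation by `γ - 1` gives `γ ^ (k - 1) (γ ^ 2 - 3 γ + 1) = -1`, so `γ` is
a perturbation of the root `φ ^ 2` of `x ^ 2 - 3 x + 1` of size `ε = γ ^ (1 - k) ≤ (5 / 13) ^ (k - 1)`,
namely `0 ≤ φ ^ 2 - γ ≤ ε / 2.2`. The left side equals
`2 φ ^ (2 n + 1) / (φ + 2) · A · (γ / φ ^ 2) ^ n` with `A = (φ + 2) (γ - 1) g_k(γ) / φ`.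
Since `A = 1` at `γ = φ ^ 2`, `ε = 0`, one gets `|A - 1| ≤ k ε / 4`, and Bernoulli's inequality gives
`|(γ / φ ^ 2) ^ n - 1| ≤ n ε / 5`. Finally `k ≤ 2 ^ k`, `n < φ ^ (k / 2) ≤ 1.28 ^ k` and
`2 · 1.28 · 5 / 13 < 1` put both errors below `1.25 / φ ^ (k / 2)`. -/

theorem phi_sq : φ ^ 2 = φ + 1 := Real.goldenRatio_sq

theorem phi_pos : 0 < φ := Real.goldenRatio_pos

theorem phi_bounds : 1.618 < φ ∧ φ < 1.62 := by
  have h5 := Real.sq_sqrt (show (0 : ℝ) ≤ 5 by norm_num)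
  have := Real.sqrt_nonneg 5
  unfold φ
  constructor <;> nlinarith

theorem phi_rpow_half (k : ℕ) : φ ^ ((k : ℝ) / 2) = √φ ^ k := by
  rw [Real.rpow_div_two_eq_sqrt _ phi_pos.le, Real.rpow_natCast]

theorem sqrt_phi_le : √φ ≤ 1.28 :=
  Real.sqrt_le_iff.mpr ⟨by norm_num, by linarith [phi_bounds.2]⟩

namespace IsDomRoot

variable {k : ℕ} {γ : ℝ}

theorem pow_pred_mul_quadratic (h : IsDomRoot k γ) :
    γ ^ (k - 1) * (γ ^ 2 - 3 * γ + 1) = -1 := by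
  obtain ⟨hγ, hroot⟩ := h
  rw [geom_sum_eq hγ.ne'] at hroot
  cases k with
  | zero => norm_num at hroot
  | succ m =>
    have : γ - 1 ≠ 0 := sub_ne_zero.mpr hγ.ne'
    simp only [Nat.add_sub_cancel] at hroot ⊢
    field_simp at hroot
    linear_combination hroot

theorem quadratic_eq (h : IsDomRoot k γ) : γ ^ 2 - 3 * γ + 1 = -(γ ^ (k - 1))⁻¹ := by
  have : γ ^ (k - 1) ≠ 0 := pow_ne_zero _ (by linarith [h.1])
  field_simp
  linear_combination h.pow_pred_mul_quadratic

theorem two_point_six_lt (h : IsDomRoot k γ) (hk : 6 ≤ k) : 2.6 < γ := by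
  by_contra! hle
  have hq := h.pow_pred_mul_quadratic
  rcases le_or_gt γ 2 with h2 | h2
  · have h1 : 1 < γ ^ (k - 1) := one_lt_pow₀ h.1 (by omega)
    -- on `(1, 2]` the quadratic is at most `-1`
    nlinarith [mul_nonneg (by linarith : (0 : ℝ) ≤ γ ^ (k - 1))
      (mul_nonneg (sub_nonneg.2 h.1.le) (sub_nonneg.2 h2))]
  · have h32 : 32 ≤ γ ^ (k - 1) :=
      calc (32 : ℝ) = 2 ^ 5 := by norm_num
        _ ≤ 2 ^ (k - 1) := pow_le_pow_right₀ (by norm_num) (by omega)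
        _ ≤ γ ^ (k - 1) := pow_le_pow_left₀ (by norm_num) h2.le _
    -- on `(2, 2.6]` the quadratic is at most `-0.04`
    nlinarith [mul_nonneg (by linarith : (0 : ℝ) ≤ γ ^ (k - 1) - 32)
      (by nlinarith : (0 : ℝ) ≤ -(γ ^ 2 - 3 * γ + 1.04))]

theorem inv_pow_pred_le (h : IsDomRoot k γ) (hk : 6 ≤ k) :
    (γ ^ (k - 1))⁻¹ ≤ (5 / 13) ^ (k - 1) :=
  calc (γ ^ (k - 1))⁻¹ ≤ ((13 / 5) ^ (k - 1))⁻¹ :=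
        inv_anti₀ (by positivity)
          (pow_le_pow_left₀ (by norm_num) (by linarith [h.two_point_six_lt hk]) _)
    _ = (5 / 13) ^ (k - 1) := by rw [← inv_pow]; norm_num

end IsDomRoot

theorem abs_mul_sub_one_le {a b : ℝ} (hb : |b| ≤ 1) : |a * b - 1| ≤ |a - 1| + |b - 1| :=
  calc |a * b - 1| = |(a - 1) * b + (b - 1)| := by ring_nf
    _ ≤ |a - 1| * |b| + |b - 1| := by rw [← abs_mul]; exact abs_add_le _ _
    _ ≤ |a - 1| + |b - 1| := by gcongr; exact mul_le_of_le_one_right (abs_nonneg _) hb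

theorem abs_pow_sub_one_le {r : ℝ} (h0 : 0 ≤ r) (h1 : r ≤ 1) (n : ℕ) :
    |r ^ n - 1| ≤ n * (1 - r) := by
  rw [abs_of_nonpos (by linarith [pow_le_one₀ h0 h1 (n := n)])]
  have := one_add_mul_le_pow (show -2 ≤ r - 1 by linarith) n
  rw [add_sub_cancel] at this
  linarith

section Perturbation

variable {γ ε : ℝ}

theorem phi_sq_sub_mul_eq (hq : γ ^ 2 - 3 * γ + 1 = -ε) :
    (φ ^ 2 - γ) * (γ + φ ^ 2 - 3) = ε := by
  linear_combination (φ ^ 2 + φ - 1) * phi_sq - hq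

theorem phi_sq_sub_bounds (hγ : 2.6 < γ) (hq : γ ^ 2 - 3 * γ + 1 = -ε) (hε : 0 ≤ ε) :
    0 ≤ φ ^ 2 - γ ∧ 2.2 * (φ ^ 2 - γ) ≤ ε := by
  have hmul := phi_sq_sub_mul_eq hq
  have hc : 2.2 < γ + φ ^ 2 - 3 := by linarith [phi_sq, phi_bounds.1]
  have hδ : 0 ≤ φ ^ 2 - γ := nonneg_of_mul_nonneg_left (hmul ▸ hε) (by linarith)
  exact ⟨hδ, by nlinarith⟩

theorem g_eq_of_quadratic_eq (k : ℕ) (hq : γ ^ 2 - 3 * γ + 1 = -ε) :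
    g k γ = (γ - 1) / (γ ^ 2 - 1 - k * ε) := by
  unfold g
  congr 1
  linear_combination (k : ℝ) * hq

theorem abs_mul_g_sub_one_le {k : ℕ} (hk : 3 ≤ k) (hγ : 2.6 < γ)
    (hq : γ ^ 2 - 3 * γ + 1 = -ε) (hε : 0 ≤ ε) (hkε : k * ε ≤ 1e-4) :
    |(φ + 2) * (γ - 1) * g k γ / φ - 1| ≤ k * ε / 4 := by
  obtain ⟨hφ₁, hφ₂⟩ := phi_bounds
  obtain ⟨hδ₀, hδ⟩ := phi_sq_sub_bounds hγ hq hε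
  have hk' : (3 : ℝ) ≤ k := by exact_mod_cast hk
  rw [g_eq_of_quadratic_eq k hq]
  set D := γ ^ 2 - 1 - k * ε
  have hD : 5.7 < D := by nlinarith
  have hφD : 9.2 < φ * D := by nlinarith
  -- the numerator vanishes at `γ = φ ^ 2`, `ε = 0`:
  -- `(φ ^ 2 - 1) ^ 2 (φ + 2) = φ (φ ^ 4 - 1)`
  have hA : (φ + 2) * (γ - 1) * ((γ - 1) / D) / φ - 1
      = (φ * k * ε - 2 * (γ - 1) * (φ ^ 2 - γ)) / (φ * D) := by
    field_simp [phi_pos.ne', (by linarith : D ≠ 0)]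
    linear_combination (2 * γ - 2) * phi_sq
  have hγδ : 0 ≤ (γ - 1) * (φ ^ 2 - γ) := mul_nonneg (by linarith) hδ₀
  have hγδ' : 2 * (γ - 1) * (φ ^ 2 - γ) ≤ 0.5 * (k * ε) := by nlinarith [phi_sq]
  have hkε₀ : 0 ≤ φ * (k * ε) := by positivity
  rw [hA, abs_div, abs_of_pos (show 0 < φ * D by linarith), div_le_iff₀ (by linarith), abs_le]
  constructor <;> nlinarith

theorem div_phi_sq_le_one (hγ : 2.6 < γ) (hq : γ ^ 2 - 3 * γ + 1 = -ε) (hε : 0 ≤ ε) :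
    γ / φ ^ 2 ≤ 1 :=
  (div_le_one (pow_pos phi_pos 2)).mpr (by linarith [(phi_sq_sub_bounds hγ hq hε).1])

theorem one_sub_div_phi_sq_le (hγ : 2.6 < γ) (hq : γ ^ 2 - 3 * γ + 1 = -ε) (hε : 0 ≤ ε) :
    1 - γ / φ ^ 2 ≤ ε / 5 := by
  obtain ⟨hδ₀, hδ⟩ := phi_sq_sub_bounds hγ hq hε
  have hφ : 2.6 < φ ^ 2 := by linarith [phi_sq, phi_bounds.1]
  rw [one_sub_div (by linarith), div_le_div_iff₀ (by linarith) (by norm_num)]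
  nlinarith

end Perturbation

theorem natCast_mul_pow_pred_le {k : ℕ} (hk : 50 ≤ k) :
    (k : ℝ) * (5 / 13) ^ (k - 1) ≤ 1e-4 := by
  obtain ⟨m, rfl⟩ : ∃ m, k = m + 1 := ⟨k - 1, by omega⟩
  have hk2 : ((m + 1 : ℕ) : ℝ) ≤ 2 ^ (m + 1) := by exact_mod_cast (Nat.lt_two_pow_self).le
  calc ((m + 1 : ℕ) : ℝ) * (5 / 13) ^ (m + 1 - 1) ≤ 2 ^ (m + 1) * (5 / 13) ^ m := by
        rw [Nat.add_sub_cancel]; gcongr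
    _ = 2 * (10 / 13) ^ m := by
        rw [pow_succ, show (10 / 13 : ℝ) = 2 * (5 / 13) by norm_num, mul_pow]; ring
    _ ≤ 2 * (10 / 13) ^ 49 := by
        gcongr 2 * ?_
        exact pow_le_pow_of_le_one (by norm_num) (by norm_num) (by omega : 49 ≤ m)
    _ ≤ 1e-4 := by norm_num

theorem natCast_mul_pow_pred_mul_le {k : ℕ} (hk : 1 ≤ k) :
    (k : ℝ) * (5 / 13) ^ (k - 1) * 1.28 ^ k ≤ 2.56 := by
  obtain ⟨m, rfl⟩ : ∃ m, k = m + 1 := ⟨k - 1, by omega⟩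
  have hk2 : ((m + 1 : ℕ) : ℝ) ≤ 2 ^ (m + 1) := by exact_mod_cast (Nat.lt_two_pow_self).le
  calc ((m + 1 : ℕ) : ℝ) * (5 / 13) ^ (m + 1 - 1) * 1.28 ^ (m + 1)
        ≤ 2 ^ (m + 1) * (5 / 13) ^ m * 1.28 ^ (m + 1) := by rw [Nat.add_sub_cancel]; gcongr
    _ = 2.56 * (128 / 130) ^ m := by
        rw [show (128 / 130 : ℝ) = 2 * (5 / 13) * 1.28 by norm_num, mul_pow, mul_pow]; ring
    _ ≤ 2.56 := mul_le_of_le_one_right (by norm_num) (pow_le_one₀ (by norm_num) (by norm_num))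

theorem phi_pow_mul_pow_pred_le {k : ℕ} (hk : 50 ≤ k) :
    φ ^ k * (5 / 13) ^ (k - 1) ≤ 5e-4 := by
  obtain ⟨m, rfl⟩ : ∃ m, k = m + 1 := ⟨k - 1, by omega⟩
  have hφ := phi_bounds
  calc φ ^ (m + 1) * (5 / 13) ^ (m + 1 - 1) ≤ 1.62 ^ (m + 1) * (5 / 13) ^ m := by
        rw [Nat.add_sub_cancel]
        exact mul_le_mul_of_nonneg_right (pow_le_pow_left₀ phi_pos.le hφ.2.le _) (by positivity)
    _ = 1.62 * (81 / 130) ^ m := by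
        rw [show (81 / 130 : ℝ) = 1.62 * (5 / 13) by norm_num, mul_pow, pow_succ]; ring
    _ ≤ 1.62 * (81 / 130) ^ 49 := by
        gcongr 1.62 * ?_
        exact pow_le_pow_of_le_one (by norm_num) (by norm_num) (by omega : 49 ≤ m)
    _ ≤ 5e-4 := by norm_num

theorem approx_error_lt {k n : ℕ} {ε : ℝ} (hk : 50 ≤ k) (hε₀ : 0 ≤ ε)
    (hε : ε ≤ (5 / 13) ^ (k - 1)) (hn : (n : ℝ) < √φ ^ k) :
    k * ε / 4 + n * ε / 5 < 1.25 / √φ ^ k := by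
  have hs : 0 < √φ ^ k := by have := phi_pos; positivity
  have hkε : k * ε * √φ ^ k ≤ 2.56 :=
    calc k * ε * √φ ^ k ≤ k * (5 / 13) ^ (k - 1) * 1.28 ^ k := by
          gcongr; exact sqrt_phi_le
      _ ≤ 2.56 := natCast_mul_pow_pred_mul_le (by omega)
  have hnε : n * ε * √φ ^ k ≤ 5e-4 :=
    calc n * ε * √φ ^ k ≤ √φ ^ k * ε * √φ ^ k := by gcongr
      _ = (√φ * √φ) ^ k * ε := by ring
      _ = φ ^ k * ε := by rw [Real.mul_self_sqrt phi_pos.le]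
      _ ≤ φ ^ k * (5 / 13) ^ (k - 1) := by gcongr; exact pow_nonneg phi_pos.le _
      _ ≤ 5e-4 := phi_pow_mul_pow_pred_le hk
  rw [lt_div_iff₀ hs]
  linarith

theorem dominant_term_approx_general (k : ℕ) (hk : 50 ≤ k) (γ : ℝ) (hγ : IsDomRoot k γ)
    (n : ℕ) (hnk : (n : ℝ) < φ ^ ((k : ℝ) / 2)) :
    ∃ ξ : ℝ, |ξ| < 1.25 / φ ^ ((k : ℝ) / 2) ∧
      (2 * γ - 2) * g k γ * γ ^ n = 2 * φ ^ (2 * n + 1) / (φ + 2) * (1 + ξ) := by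
  set ε := (γ ^ (k - 1))⁻¹
  have hq : γ ^ 2 - 3 * γ + 1 = -ε := hγ.quadratic_eq
  have hγ₀ : 2.6 < γ := hγ.two_point_six_lt (by omega)
  have hε₀ : 0 ≤ ε := by positivity
  have hε : ε ≤ (5 / 13) ^ (k - 1) := hγ.inv_pow_pred_le (by omega)
  have hr₀ : 0 ≤ γ / φ ^ 2 := by positivity
  have hr₁ := div_phi_sq_le_one hγ₀ hq hε₀
  rw [phi_rpow_half] at hnk ⊢
  refine ⟨(φ + 2) * (γ - 1) * g k γ / φ * (γ / φ ^ 2) ^ n - 1, ?_, ?_⟩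
  · calc _ ≤ |(φ + 2) * (γ - 1) * g k γ / φ - 1| + |(γ / φ ^ 2) ^ n - 1| :=
          abs_mul_sub_one_le <| by
            rw [abs_of_nonneg (by positivity)]; exact pow_le_one₀ hr₀ hr₁
      _ ≤ k * ε / 4 + n * ε / 5 := by
          gcongr
          · exact abs_mul_g_sub_one_le (by omega) hγ₀ hq hε₀
              ((mul_le_mul_of_nonneg_left hε (by positivity)).trans (natCast_mul_pow_pred_le hk))
          · calc _ ≤ n * (1 - γ / φ ^ 2) := abs_pow_sub_one_le hr₀ hr₁ n
              _ ≤ n * (ε / 5) := by gcongr; exact one_sub_div_phi_sq_le hγ₀ hq hε₀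
              _ = n * ε / 5 := by ring
      _ < 1.25 / √φ ^ k := approx_error_lt hk hε₀ hε hnk
  · have hφ : φ ≠ 0 := phi_pos.ne'
    have hφ2 : φ + 2 ≠ 0 := by linarith [phi_pos]
    simp only [div_pow, ← pow_mul]
    field_simp
    ring

theorem dominant_term_approx (k : ℕ) (hk : 50 ≤ k) (γ : ℝ) (hγ : IsDomRoot k γ)
    (n : ℕ) (hn : 1 < n) (hnk : (n : ℝ) < φ ^ ((k : ℝ) / 2)) :
    ∃ ξ : ℝ, |ξ| < 1.25 / φ ^ ((k : ℝ) / 2) ∧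
      (2 * γ - 2) * g k γ * γ ^ n = 2 * φ ^ (2 * n + 1) / (φ + 2) * (1 + ξ) :=
  dominant_term_approx_general k hk γ hγ n hnk
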